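/- In U_h(sl₂), for all natural numbers a, b the normal-ordering formula (z^a/a!)(x^b/b!) = ∑_{v=0}^{min(a,b)} (-1)^v · (x^{b-v}/(b-v)!) · (y + (a+b-(v+1))h)_{v,-h} · (z^{a-v}/(a-v)!) · (h^v/v!) holds, where (u)_{v,-h} = u(u-h)(u-2h)···(u-(v-1)h). -/

import Mathlib

namespace UhSl2

/-- Generators of `U_h(sl₂)`. -/
inductive Gen : Type | x | y | z | h

variable (K : Type*) [Field K]

open FreeAlgebra in
/-- Defining relations of `U_h(sl₂)`: `h` is central, `yx = xy + 2xh`,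
`zx = xz - yh`, `zy = yz + 2zh`. -/
inductive Rel : FreeAlgebra K Gen → FreeAlgebra K Gen → Prop
  | yx : Rel (ι K Gen.y * ι K Gen.x) (ι K Gen.x * ι K Gen.y + 2 * (ι K Gen.x * ι K Gen.h))
  | zx : Rel (ι K Gen.z * ι K Gen.x) (ι K Gen.x * ι K Gen.z - ι K Gen.y * ι K Gen.h)
  | zy : Rel (ι K Gen.z * ι K Gen.y) (ι K Gen.y * ι K Gen.z + 2 * (ι K Gen.z * ι K Gen.h))
  | hx : Rel (ι K Gen.h * ι K Gen.x) (ι K Gen.x * ι K Gen.h)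
  | hy : Rel (ι K Gen.h * ι K Gen.y) (ι K Gen.y * ι K Gen.h)
  | hz : Rel (ι K Gen.h * ι K Gen.z) (ι K Gen.z * ι K Gen.h)

/-- The homogeneous universal enveloping algebra `U_h(sl₂)`. -/
abbrev Uh := RingQuot (Rel K)

noncomputable def X : Uh K := RingQuot.mkAlgHom K (Rel K) (FreeAlgebra.ι K Gen.x)
noncomputable def Y : Uh K := RingQuot.mkAlgHom K (Rel K) (FreeAlgebra.ι K Gen.y)
noncomputable def Z : Uh K := RingQuot.mkAlgHom K (Rel K) (FreeAlgebra.ι K Gen.z)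
noncomputable def H : Uh K := RingQuot.mkAlgHom K (Rel K) (FreeAlgebra.ι K Gen.h)

/-- Divided power `u^n / n!`. -/
noncomputable def dp (n : ℕ) (u : Uh K) : Uh K := (n.factorial : K)⁻¹ • u ^ n

end UhSl2

open UhSl2

/-!
Moving `z` past `x` costs a term `y h`: by induction on `n`,
`z^n x = x z^n - n (y + (n-1)h) z^(n-1) h`, and a factor `y + s h` moves past `x` or `z` at the
price of shifting `s` by `2`. Building `x^b` one factor at a time then gives
`z^a x^b = ∑_v (-1)^v a!/(a-v)! C(b,v) x^(b-v) (y + (a+b-v-1)h)_{v,-h} z^(a-v) h^v`: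
in the induction step the two contributions to each `v` merge into one Pochhammer symbol, because
all the factors `y + s h` commute, the coefficients obey Pascal-type recurrences, and `y + s h` is
affine in `s`. Dividing by `a! b!` gives the divided-power form.
-/

theorem Finset.sum_range_sub_eq_add_sum_succ_sub {M : Type*} [AddCommGroup M] (f g : ℕ → M)
    {n : ℕ} (hf : f n = 0) :
    ∑ i ∈ range n, (f i - g i) = f 0 + ∑ i ∈ range n, (f (i + 1) - g i) := by
  rw [sum_sub_distrib, sum_sub_distrib, ← add_sub_assoc, add_comm, ← sum_range_succ',
    sum_range_succ, hf, add_zero]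

namespace UhSl2

open Finset

variable {K : Type*} [Field K]

theorem commute_H_X : Commute (H K) (X K) := by
  show H K * X K = X K * H K
  simpa only [map_mul, H, X] using RingQuot.mkAlgHom_rel K (Rel.hx (K := K))

theorem commute_H_Y : Commute (H K) (Y K) := by
  show H K * Y K = Y K * H K
  simpa only [map_mul, H, Y] using RingQuot.mkAlgHom_rel K (Rel.hy (K := K))

theorem commute_H_Z : Commute (H K) (Z K) := by
  show H K * Z K = Z K * H K
  simpa only [map_mul, H, Z] using RingQuot.mkAlgHom_rel K (Rel.hz (K := K))

theorem Y_mul_X : Y K * X K = X K * Y K + (2 : K) • (X K * H K) := by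
  rw [two_smul, ← two_mul]
  simpa only [map_mul, map_add, map_ofNat, X, Y, H] using
    RingQuot.mkAlgHom_rel K (Rel.yx (K := K))

theorem Z_mul_X : Z K * X K = X K * Z K - Y K * H K := by
  simpa only [map_mul, map_sub, X, Y, Z, H] using RingQuot.mkAlgHom_rel K (Rel.zx (K := K))

theorem Z_mul_Y : Z K * Y K = Y K * Z K + (2 : K) • (Z K * H K) := by
  rw [two_smul, ← two_mul]
  simpa only [map_mul, map_add, map_ofNat, Y, Z, H] using
    RingQuot.mkAlgHom_rel K (Rel.zy (K := K))

noncomputable def yh (s : K) : Uh K := Y K + s • H K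

/-- `poch s v` is the Pochhammer symbol `(y + s h)_{v,-h}`. -/
noncomputable def poch (s : K) (v : ℕ) : Uh K :=
  ((List.range v).map fun i : ℕ => yh (s - i)).prod

theorem commute_yh (α β : K) : Commute (yh α) (yh β) := by
  have hHY := (commute_H_Y (K := K)).symm
  exact ((Commute.refl _).add_right (hHY.smul_right β)).add_left
    ((hHY.symm.add_right ((Commute.refl _).smul_right β)).smul_left α)

theorem commute_yh_poch (α s : K) (v : ℕ) : Commute (yh α) (poch s v) :=
  Commute.list_prod_right _ _ fun _ hx => by
    obtain ⟨i, -, rfl⟩ := List.mem_map.mp hx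
    exact commute_yh _ _

theorem poch_zero (s : K) : poch s 0 = 1 := rfl

theorem poch_succ (s : K) (v : ℕ) : poch s (v + 1) = poch s v * yh (s - v) := by
  simp [poch, List.range_succ]

theorem poch_succ' (s : K) (v : ℕ) : poch s (v + 1) = yh s * poch (s - 1) v := by
  simp only [poch, List.range_succ_eq_map, List.map_cons, List.prod_cons, List.map_map,
    Nat.cast_zero, sub_zero]
  congr 3 with i
  simp only [Function.comp_apply, Nat.cast_succ]
  congr 1
  ring

theorem yh_mul_X (α : K) : yh α * X K = X K * yh (α + 2) := by
  simp only [yh, add_mul, mul_add, smul_mul_assoc, mul_smul_comm, Y_mul_X, commute_H_X.eq]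
  module

theorem poch_mul_X (s : K) (v : ℕ) : poch s v * X K = X K * poch (s + 2) v := by
  induction v with
  | zero => simp [poch_zero]
  | succ v ih =>
    rw [poch_succ, mul_assoc, yh_mul_X, ← mul_assoc, ih, mul_assoc, poch_succ, sub_add_eq_add_sub]

theorem Z_mul_yh (β : K) : Z K * yh β = yh (β + 2) * Z K := by
  simp only [yh, add_mul, mul_add, smul_mul_assoc, mul_smul_comm, Z_mul_Y, commute_H_Z.eq]
  module

theorem Y_add_smul_yh (n : K) : Y K + (n + 1) • yh (n + 2) = (n + 2) • yh (n + 1) := by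
  simp only [yh]
  module

theorem Z_pow_succ_mul_X (n : ℕ) :
    Z K ^ (n + 1) * X K = X K * Z K ^ (n + 1) - ((n : K) + 1) • (yh (n : K) * Z K ^ n * H K) := by
  induction n with
  | zero => simpa [yh] using Z_mul_X
  | succ n ih =>
    have hZH : H K * Z K ^ (n + 1) = Z K ^ (n + 1) * H K := (commute_H_Z.pow_right _).eq
    calc Z K ^ (n + 1 + 1) * X K = Z K * (Z K ^ (n + 1) * X K) := by
          rw [← mul_assoc, ← pow_succ']
      _ = X K * Z K ^ (n + 1 + 1)
            - (Y K + ((n : K) + 1) • yh ((n : K) + 2)) * Z K ^ (n + 1) * H K := by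
        rw [ih, mul_sub, ← mul_assoc, Z_mul_X, mul_smul_comm, ← mul_assoc, ← mul_assoc,
          Z_mul_yh, mul_assoc _ (Z K), ← pow_succ']
        simp only [sub_mul, add_mul, smul_mul_assoc, mul_assoc, hZH, ← pow_succ']
        abel
      _ = _ := by rw [Y_add_smul_yh]; push_cast; simp only [smul_mul_assoc]; ring_nf

-- At `n = 0` the truncated `n - 1` is harmless: its coefficient `n` vanishes.
theorem Z_pow_mul_X (n : ℕ) :
    Z K ^ n * X K = X K * Z K ^ n - (n : K) • (yh ((n : K) - 1) * Z K ^ (n - 1) * H K) := by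
  cases n with
  | zero => simp
  | succ n => simpa using Z_pow_succ_mul_X n

theorem X_pow_poch_Z_pow_H_pow_mul_X (p q v : ℕ) (s : K) :
    X K ^ p * poch s v * Z K ^ q * H K ^ v * X K =
      X K ^ (p + 1) * poch (s + 2) v * Z K ^ q * H K ^ v -
        (q : K) • (X K ^ p * (poch s v * yh ((q : K) - 1)) * Z K ^ (q - 1) * H K ^ (v + 1)) := by
  have hX : X K ^ p * poch s v * X K = X K ^ (p + 1) * poch (s + 2) v := by
    rw [mul_assoc, poch_mul_X, ← mul_assoc, ← pow_succ]
  rw [mul_assoc _ (H K ^ v), (commute_H_X.pow_left v).eq, ← mul_assoc, mul_assoc _ (Z K ^ q),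
    Z_pow_mul_X, mul_sub, ← mul_assoc _ (X K), hX, mul_smul_comm]
  simp only [sub_mul, smul_mul_assoc, mul_assoc, ← pow_succ']

variable (K) in
noncomputable def normalCoeff (a b v : ℕ) : K := (-1) ^ v * (a.descFactorial v * b.choose v : ℕ)

theorem normalCoeff_zero (a b : ℕ) : normalCoeff K a b 0 = 1 := by simp [normalCoeff]

theorem normalCoeff_eq_zero_of_lt_left {a b v : ℕ} (h : a < v) : normalCoeff K a b v = 0 := by
  simp [normalCoeff, Nat.descFactorial_eq_zero_iff_lt.mpr h]

theorem normalCoeff_eq_zero_of_lt_right {a b v : ℕ} (h : b < v) : normalCoeff K a b v = 0 := by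
  simp [normalCoeff, Nat.choose_eq_zero_of_lt h]

theorem normalCoeff_succ_sub (a b v : ℕ) :
    normalCoeff K a b (v + 1) - normalCoeff K a b v * ((a - v : ℕ) : K) =
      normalCoeff K a (b + 1) (v + 1) := by
  simp only [normalCoeff, Nat.descFactorial_succ, Nat.choose_succ_succ]
  push_cast
  ring

theorem normalCoeff_succ_mul_sub {a b v : ℕ} (hv : v ≤ b) :
    normalCoeff K a b (v + 1) * ((a : K) + b - (v + 1) + 1)
        - normalCoeff K a b v * ((a - v : ℕ) : K) * (((a - v : ℕ) : K) - 1) =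
      normalCoeff K a (b + 1) (v + 1) * ((a : K) + b - (v + 1) - v) := by
  rcases le_or_gt v a with hva | hva
  · have hb : (b.choose (v + 1) : K) * (v + 1) = b.choose v * ((b : K) - v) := by
      exact_mod_cast congrArg (Nat.cast (R := K)) (Nat.choose_succ_right_eq b v)
    simp only [normalCoeff, Nat.descFactorial_succ, Nat.choose_succ_succ]
    push_cast [hva]
    linear_combination (-(-1 : K) ^ v * (a.descFactorial v) * ((a : K) - v)) * hb
  · simp [normalCoeff_eq_zero_of_lt_left hva,
      normalCoeff_eq_zero_of_lt_left (hva.trans (Nat.lt_succ_self v)),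
      Nat.sub_eq_zero_of_le hva.le]

theorem smul_yh_sub_smul_yh {c₁ c₂ c₃ α₁ α₂ α₃ : K} (h : c₁ - c₂ = c₃)
    (h' : c₁ * α₁ - c₂ * α₂ = c₃ * α₃) :
    c₁ • yh α₁ - c₂ • yh α₂ = c₃ • yh α₃ := by
  subst h
  simp only [yh, smul_add, smul_smul, ← h']
  module

theorem normalCoeff_smul_poch_succ {a b v : ℕ} (hv : v ≤ b) :
    normalCoeff K a b (v + 1) • poch ((a : K) + b - (v + 1) + 1) (v + 1)
        - (normalCoeff K a b v * ((a - v : ℕ) : K)) •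
          (poch ((a : K) + b - (v + 1)) v * yh (((a - v : ℕ) : K) - 1)) =
      normalCoeff K a (b + 1) (v + 1) • poch ((a : K) + b - (v + 1)) (v + 1) := by
  rw [poch_succ', add_sub_cancel_right, (commute_yh_poch _ _ _).eq, poch_succ,
    ← mul_smul_comm, ← mul_smul_comm, ← mul_smul_comm, ← mul_sub,
    smul_yh_sub_smul_yh (normalCoeff_succ_sub a b v) (normalCoeff_succ_mul_sub hv)]

variable (K) in
noncomputable def normalTerm (a b v : ℕ) : Uh K :=
  X K ^ (b - v) * poch ((a : K) + b - (v + 1)) v * Z K ^ (a - v) * H K ^ v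

theorem sum_normalCoeff_smul_normalTerm_mul_X (a b : ℕ) :
    (∑ v ∈ range (b + 1), normalCoeff K a b v • normalTerm K a b v) * X K =
      ∑ v ∈ range (b + 2), normalCoeff K a (b + 1) v • normalTerm K a (b + 1) v := by
  have hsplit : ∀ v ∈ range (b + 1), normalCoeff K a b v • normalTerm K a b v * X K =
      normalCoeff K a b v •
          (X K ^ (b + 1 - v) * poch ((a : K) + b - (v + 1) + 2) v * Z K ^ (a - v) * H K ^ v)
        - (normalCoeff K a b v * ((a - v : ℕ) : K)) •
          (X K ^ (b - v) * (poch ((a : K) + b - (v + 1)) v * yh (((a - v : ℕ) : K) - 1))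
            * Z K ^ (a - v - 1) * H K ^ (v + 1)) := by
    intro v hv
    rw [smul_mul_assoc, normalTerm, X_pow_poch_Z_pow_H_pow_mul_X, smul_sub, smul_smul,
      Nat.sub_add_comm (Nat.lt_succ_iff.mp (mem_range.mp hv))]
  have hstep : ∀ v ∈ range (b + 1),
      normalCoeff K a b (v + 1) •
          (X K ^ (b + 1 - (v + 1)) * poch ((a : K) + b - ((v + 1 : ℕ) + 1) + 2) (v + 1)
            * Z K ^ (a - (v + 1)) * H K ^ (v + 1))
        - (normalCoeff K a b v * ((a - v : ℕ) : K)) •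
          (X K ^ (b - v) * (poch ((a : K) + b - (v + 1)) v * yh (((a - v : ℕ) : K) - 1))
            * Z K ^ (a - v - 1) * H K ^ (v + 1))
        = normalCoeff K a (b + 1) (v + 1) • normalTerm K a (b + 1) (v + 1) := by
    intro v hmem
    have hv : v ≤ b := Nat.lt_succ_iff.mp (mem_range.mp hmem)
    have hs₁ : (a : K) + b - ((v + 1 : ℕ) + 1) + 2 = a + b - (v + 1) + 1 := by push_cast; ring
    have hs₂ : (a : K) + (b + 1 : ℕ) - ((v + 1 : ℕ) + 1) = a + b - (v + 1) := by
      push_cast; ring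
    rw [normalTerm, Nat.add_sub_add_right, Nat.sub_add_eq, hs₁, hs₂]
    simpa only [mul_sub, sub_mul, mul_smul_comm, smul_mul_assoc] using
      congrArg (fun u => X K ^ (b - v) * u * Z K ^ (a - v - 1) * H K ^ (v + 1))
        (normalCoeff_smul_poch_succ (a := a) hv)
  rw [sum_mul, sum_congr rfl hsplit,
    sum_range_sub_eq_add_sum_succ_sub _ _ (by simp [normalCoeff_eq_zero_of_lt_right]),
    sum_congr rfl hstep, sum_range_succ' _ (b + 1), add_comm]
  simp [normalCoeff_zero, normalTerm, poch_zero]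

theorem Z_pow_mul_X_pow (a b : ℕ) :
    Z K ^ a * X K ^ b = ∑ v ∈ range (b + 1), normalCoeff K a b v • normalTerm K a b v := by
  induction b with
  | zero => simp [normalCoeff_zero, normalTerm, poch_zero]
  | succ b ih => rw [pow_succ, ← mul_assoc, ih, sum_normalCoeff_smul_normalTerm_mul_X]

theorem dp_Z_mul_dp_X (a b : ℕ) :
    dp K a (Z K) * dp K b (X K) = ∑ v ∈ range (min a b + 1),
      ((a.factorial : K)⁻¹ * (b.factorial : K)⁻¹ * normalCoeff K a b v) •
        normalTerm K a b v := by
  simp only [dp, smul_mul_smul_comm, Z_pow_mul_X_pow, smul_sum, smul_smul]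
  refine (sum_subset (range_subset_range.mpr (by omega)) fun v hvb hva => ?_).symm
  simp only [mem_range] at hvb hva
  rw [normalCoeff_eq_zero_of_lt_left (by omega), mul_zero, zero_smul]

theorem inv_factorial_mul_normalCoeff [CharZero K] {a b v : ℕ} (hva : v ≤ a) (hvb : v ≤ b) :
    (a.factorial : K)⁻¹ * (b.factorial : K)⁻¹ * normalCoeff K a b v =
      (-1) ^ v * ((b - v).factorial : K)⁻¹ * ((a - v).factorial : K)⁻¹ *
        (v.factorial : K)⁻¹ := by
  have ha : ((a - v).factorial : K) * a.descFactorial v = a.factorial := by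
    exact_mod_cast Nat.factorial_mul_descFactorial hva
  have hb : (b.choose v : K) * v.factorial * (b - v).factorial = b.factorial := by
    exact_mod_cast Nat.choose_mul_factorial_mul_factorial hvb
  have hd : (a.descFactorial v : K) ≠ 0 := by
    exact_mod_cast (Nat.descFactorial_eq_zero_iff_lt.not.mpr (Nat.not_lt.mpr hva))
  have hc : (b.choose v : K) ≠ 0 := by exact_mod_cast (Nat.choose_pos hvb).ne'
  rw [normalCoeff, ← ha, ← hb]
  push_cast
  field_simp

theorem inv_factorial_mul_normalCoeff_smul_normalTerm [CharZero K] {a b v : ℕ} (hva : v ≤ a)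
    (hvb : v ≤ b) :
    ((a.factorial : K)⁻¹ * (b.factorial : K)⁻¹ * normalCoeff K a b v) • normalTerm K a b v =
      (-1 : K) ^ v • (dp K (b - v) (X K) * poch ((a : K) + b - (v + 1)) v * dp K (a - v) (Z K) *
        dp K v (H K)) := by
  rw [inv_factorial_mul_normalCoeff hva hvb, normalTerm]
  simp only [dp, smul_mul_assoc, mul_smul_comm, smul_smul]
  ring_nf

end UhSl2

/-- In `U_h(sl₂)`:
`(z^a/a!)(x^b/b!) = ∑_{v=0}^{min(a,b)} (-1)^v (x^{b-v}/(b-v)!) (y+(a+b-(v+1))h)_{v,-h} (z^{a-v}/(a-v)!)(h^v/v!)`,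
where `(u)_{v,-h} = u(u-h)···(u-(v-1)h)` (here the `i`-th factor is
`y + (a+b-(v+1)-i)h`). -/
theorem zx_normal_order_pochhammer (K : Type*) [Field K] [CharZero K] (a b : ℕ) :
    dp K a (Z K) * dp K b (X K) =
      ∑ v ∈ Finset.range (min a b + 1),
        ((-1 : K) ^ v) •
          (dp K (b - v) (X K) *
            ((List.range v).map
              (fun i : ℕ => Y K + (((a : K) + (b : K) - ((v : K) + 1)) - (i : K)) • H K)).prod *
            dp K (a - v) (Z K) * dp K v (H K)) := by
  rw [dp_Z_mul_dp_X]
  refine Finset.sum_congr rfl fun v hv => ?_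
  have hv : v ≤ min a b := Nat.lt_succ_iff.mp (Finset.mem_range.mp hv)
  exact inv_factorial_mul_normalCoeff_smul_normalTerm (hv.trans (min_le_left a b))
    (hv.trans (min_le_right a b))
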